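/- With X := T_0 T_1 ⋯ T_n, one has X^{-1} T_1 X = X T_{n-1} X^{-1}, and the element T̄_n := X^{-1} T_1 X satisfies the periodic braid relations T̄_n T_{n-1} T̄_n = T_{n-1} T̄_n T_{n-1} and T̄_n T_1 T̄_n = T_1 T̄_n T_1. -/

import Mathlib

/-- The ordered product `T a * T (a+1) * ⋯ * T b` (equal to `1` when `b < a`). -/
def upProd {G : Type*} [Monoid G] (T : ℕ → G) (a b : ℕ) : G :=
  ((List.range (b + 1 - a)).map fun k => T (a + k)).prod

/-!
Let `X = T_0 ⋯ T_n`, `Y = T_1 ⋯ T_n`, `Z = T_2 ⋯ T_n`. By the braid and far-commutation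
relations, every product `T_a ⋯ T_b` conjugates `T_j` to `T_{j+1}` when `a ≤ j < b` and
`1 ≤ j ≤ n - 2`. The heart of the matter is `T_1 X² = X² T_{n-1}`: writing `X = T_0 T_1 Z`, the
four-term relation at the `T_0` end turns both sides into `T_0 T_1 T_0 Y²`, provided
`Z Y T_{n-1} = Y²`; and the latter follows in the same way from the four-term relation at the
`T_n` end together with `Y (T_1 ⋯ T_{n-2}) = (T_2 ⋯ T_{n-1}) Y`. Hence
`X⁻¹ T_1 X = X T_{n-1} X⁻¹`, and the two braid relations of `T̄_n` are the braid relations of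
`(T_{n-2}, T_{n-1})` conjugated by `X` and of `(T_1, T_2)` conjugated by `X⁻¹`.
-/

universe u

theorem SemiconjBy.braid_iff {M : Type u} [CancelMonoid M] {x a b a' b' : M}
    (ha : SemiconjBy x a a') (hb : SemiconjBy x b b') :
    a * b * a = b * a * b ↔ a' * b' * a' = b' * a' * b' := by
  rw [← mul_left_cancel_iff (a := x), ((ha.mul_right hb).mul_right ha).eq,
    ((hb.mul_right ha).mul_right hb).eq, mul_right_cancel_iff]

section upProd

variable {M : Type u} [Monoid M] (T : ℕ → M)

theorem upProd_self (a : ℕ) : upProd T a a = T a := by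
  simp [upProd]

theorem upProd_mul_upProd {a c b : ℕ} (hac : a ≤ c + 1) (hcb : c ≤ b) :
    upProd T a c * upProd T (c + 1) b = upProd T a b := by
  have hlen : b + 1 - a = (c + 1 - a) + (b + 1 - (c + 1)) := by omega
  simp only [upProd, hlen, List.range_add, List.map_append, List.prod_append, List.map_map]
  congr 3 with k
  simp only [Function.comp_apply]
  congr 1
  omega

theorem upProd_succ_right {a b : ℕ} (h : a ≤ b + 1) :
    upProd T a (b + 1) = upProd T a b * T (b + 1) := by
  rw [← upProd_self T (b + 1), upProd_mul_upProd T h b.le_succ]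

theorem upProd_eq_mul_upProd_succ {a b : ℕ} (h : a ≤ b) :
    upProd T a b = T a * upProd T (a + 1) b := by
  rw [← upProd_self T a, upProd_mul_upProd T a.le_succ h]

theorem Commute.upProd_right {x : M} {a b : ℕ} (h : ∀ k, a ≤ k → k ≤ b → Commute x (T k)) :
    Commute x (upProd T a b) := by
  refine Commute.list_prod_right _ _ fun y hy => ?_
  obtain ⟨k, hk, rfl⟩ := List.mem_map.1 hy
  rw [List.mem_range] at hk
  exact h _ (by omega) (by omega)

theorem SemiconjBy.upProd_right {x : M} {a b : ℕ}
    (h : ∀ k, a ≤ k → k ≤ b → SemiconjBy x (T k) (T (k + 1))) :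
    SemiconjBy x (upProd T a b) (upProd T (a + 1) (b + 1)) := by
  have hlen : b + 1 + 1 - (a + 1) = b + 1 - a := by omega
  simp only [upProd, hlen]
  suffices ∀ l : List ℕ, (∀ k ∈ l, k < b + 1 - a) →
      SemiconjBy x (l.map fun k => T (a + k)).prod (l.map fun k => T (a + 1 + k)).prod from
    this _ fun k => List.mem_range.1
  intro l hl
  induction l with
  | nil => exact SemiconjBy.one_right x
  | cons k l ih =>
    simp only [List.map_cons, List.prod_cons, List.forall_mem_cons] at hl ⊢
    rw [Nat.add_right_comm]
    exact (h _ (by omega) (by omega)).mul_right (ih hl.2)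

section Braid

variable {M : Type u} [Monoid M] {n : ℕ} {T : ℕ → M}

theorem semiconjBy_upProd_succ
    (hbraid : ∀ i, 1 ≤ i → i ≤ n - 2 → T i * T (i + 1) * T i = T (i + 1) * T i * T (i + 1))
    (hcomm : ∀ i j, i ≤ n → j ≤ n → i + 2 ≤ j → T i * T j = T j * T i)
    {a b j : ℕ} (haj : a ≤ j) (hj : 1 ≤ j) (hjb : j < b) (hbn : b ≤ n) (hjn : j ≤ n - 2) :
    SemiconjBy (upProd T a b) (T j) (T (j + 1)) := by
  have hsplit : upProd T a b = upProd T a (j - 1) * (T j * T (j + 1)) * upProd T (j + 2) b := by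
    rw [← upProd_mul_upProd T (c := j - 1) (by omega) (by omega),
      upProd_eq_mul_upProd_succ T (a := j - 1 + 1) (by omega),
      upProd_eq_mul_upProd_succ T (a := j - 1 + 1 + 1) (by omega)]
    simp only [Nat.sub_add_cancel hj, mul_assoc]
  have hleft : Commute (upProd T a (j - 1)) (T (j + 1)) :=
    (Commute.upProd_right T fun k _ _ =>
      Commute.symm (hcomm k (j + 1) (by omega) (by omega) (by omega))).symm
  have hmid : SemiconjBy (T j * T (j + 1)) (T j) (T (j + 1)) := by
    rw [SemiconjBy, hbraid j hj hjn, mul_assoc]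
  have hright : Commute (upProd T (j + 2) b) (T j) :=
    (Commute.upProd_right T fun k _ _ => hcomm j k (by omega) (by omega) (by omega)).symm
  rw [hsplit]
  exact (SemiconjBy.mul_left hleft hmid).mul_left hright

theorem upProd_two_mul_upProd_one_mul
    (hbraid : ∀ i, 1 ≤ i → i ≤ n - 2 → T i * T (i + 1) * T i = T (i + 1) * T i * T (i + 1))
    (hcomm : ∀ i j, i ≤ n → j ≤ n → i + 2 ≤ j → T i * T j = T j * T i)
    (hCn : T (n - 1) * T n * T (n - 1) * T n = T n * T (n - 1) * T n * T (n - 1))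
    (hn : 3 ≤ n) :
    upProd T 2 n * upProd T 1 n * T (n - 1) = upProd T 1 n * upProd T 1 n := by
  obtain ⟨m, rfl⟩ : ∃ m, n = m + 3 := ⟨n - 3, by omega⟩
  simp only [show m + 3 - 1 = m + 2 by omega] at hCn ⊢
  have hZ : upProd T 2 (m + 3) = upProd T 2 (m + 2) * T (m + 3) := upProd_succ_right T (by omega)
  have hY : upProd T 1 (m + 3) = upProd T 1 (m + 1) * T (m + 2) * T (m + 3) := by
    rw [upProd_succ_right T (by omega), upProd_succ_right T (b := m + 1) (by omega)]
  set Y := upProd T 1 (m + 3)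
  set V := upProd T 2 (m + 2)
  set W := upProd T 1 (m + 1)
  have hWn : Commute (T (m + 3)) W :=
    Commute.upProd_right T fun k _ _ => Commute.symm (hcomm k (m + 3) (by omega) le_rfl (by omega))
  have hYW : SemiconjBy Y W V := SemiconjBy.upProd_right T fun k hk _ =>
    semiconjBy_upProd_succ hbraid hcomm hk (by omega) (by omega) le_rfl (by omega)
  calc upProd T 2 (m + 3) * Y * T (m + 2)
      = V * W * (T (m + 3) * T (m + 2) * T (m + 3) * T (m + 2)) := by
        rw [hZ, hY]; simp only [mul_assoc]; rw [hWn.left_comm]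
    _ = V * W * (T (m + 2) * T (m + 3) * T (m + 2) * T (m + 3)) := by rw [hCn]
    _ = V * Y * T (m + 2) * T (m + 3) := by rw [hY]; simp only [mul_assoc]
    _ = Y * Y := by rw [← hYW.eq, hY]; simp only [mul_assoc]

theorem T_one_mul_upProd_zero_mul_self
    (hbraid : ∀ i, 1 ≤ i → i ≤ n - 2 → T i * T (i + 1) * T i = T (i + 1) * T i * T (i + 1))
    (hcomm : ∀ i j, i ≤ n → j ≤ n → i + 2 ≤ j → T i * T j = T j * T i)
    (hC0 : T 1 * T 0 * T 1 * T 0 = T 0 * T 1 * T 0 * T 1)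
    (hCn : T (n - 1) * T n * T (n - 1) * T n = T n * T (n - 1) * T n * T (n - 1))
    (hn : 3 ≤ n) :
    T 1 * (upProd T 0 n * upProd T 0 n) = upProd T 0 n * upProd T 0 n * T (n - 1) := by
  have hYY := upProd_two_mul_upProd_one_mul hbraid hcomm hCn hn
  set Z := upProd T 2 n
  have hY : upProd T 1 n = T 1 * Z := upProd_eq_mul_upProd_succ T (by omega)
  have hX : upProd T 0 n = T 0 * (T 1 * Z) := by rw [upProd_eq_mul_upProd_succ T (by omega), hY]
  have h0Z : Commute Z (T 0) :=
    (Commute.upProd_right T fun k hk _ => hcomm 0 k (by omega) (by omega) (by omega)).symm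
  rw [hY] at hYY
  calc T 1 * (upProd T 0 n * upProd T 0 n)
      = T 1 * T 0 * T 1 * T 0 * (Z * (T 1 * Z)) := by
        rw [hX]; simp only [mul_assoc]; rw [h0Z.left_comm]
    _ = T 0 * T 1 * T 0 * (T 1 * Z * (T 1 * Z)) := by rw [hC0]; simp only [mul_assoc]
    _ = T 0 * T 1 * T 0 * (Z * (T 1 * Z) * T (n - 1)) := by rw [hYY]
    _ = upProd T 0 n * upProd T 0 n * T (n - 1) := by
        rw [hX]; simp only [mul_assoc]; rw [h0Z.left_comm]

end Braid

/-- In the affine braid group of type `C⁽¹⁾`, with `X = T_0 T_1 ⋯ T_n` one has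
`X⁻¹ T_1 X = X T_{n-1} X⁻¹`, and the element `T̄_n = X⁻¹ T_1 X` satisfies the periodic
braid relations with `T_{n-1}` and with `T_1`. -/
theorem Tbar_periodic_braid {G : Type*} [Group G] (n : ℕ) (hn : 3 ≤ n) (T : ℕ → G)
    (hbraid : ∀ i, 1 ≤ i → i ≤ n - 2 →
      T i * T (i + 1) * T i = T (i + 1) * T i * T (i + 1))
    (hcomm : ∀ i j, i ≤ n → j ≤ n → i + 2 ≤ j → T i * T j = T j * T i)
    (hC0 : T 1 * T 0 * T 1 * T 0 = T 0 * T 1 * T 0 * T 1)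
    (hCn : T (n - 1) * T n * T (n - 1) * T n = T n * T (n - 1) * T n * T (n - 1)) :
    (upProd T 0 n)⁻¹ * T 1 * upProd T 0 n = upProd T 0 n * T (n - 1) * (upProd T 0 n)⁻¹ ∧
    ((upProd T 0 n)⁻¹ * T 1 * upProd T 0 n) * T (n - 1) *
        ((upProd T 0 n)⁻¹ * T 1 * upProd T 0 n) =
      T (n - 1) * ((upProd T 0 n)⁻¹ * T 1 * upProd T 0 n) * T (n - 1) ∧
    ((upProd T 0 n)⁻¹ * T 1 * upProd T 0 n) * T 1 *
        ((upProd T 0 n)⁻¹ * T 1 * upProd T 0 n) =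
      T 1 * ((upProd T 0 n)⁻¹ * T 1 * upProd T 0 n) * T 1 := by
  have hsq := T_one_mul_upProd_zero_mul_self hbraid hcomm hC0 hCn hn
  have hX1 := semiconjBy_upProd_succ hbraid hcomm (a := 0) (b := n) (j := 1)
    (by omega) le_rfl (by omega) le_rfl (by omega)
  have hXn := semiconjBy_upProd_succ hbraid hcomm (a := 0) (b := n) (j := n - 2)
    (by omega) (by omega) (by omega) le_rfl le_rfl
  have hbn := hbraid (n - 2) (by omega) le_rfl
  rw [show n - 2 + 1 = n - 1 by omega] at hXn hbn
  set X := upProd T 0 n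
  have hTbar : X⁻¹ * T 1 * X = X * T (n - 1) * X⁻¹ :=
    calc X⁻¹ * T 1 * X = X⁻¹ * (T 1 * (X * X)) * X⁻¹ := by group
      _ = X * T (n - 1) * X⁻¹ := by rw [hsq]; group
  refine ⟨hTbar, ?_, ?_⟩
  · rw [hTbar]
    exact ((hXn.braid_iff (SemiconjBy.conj_mk X (T (n - 1)))).1 hbn).symm
  · have hXTbar : SemiconjBy X (X⁻¹ * T 1 * X) (T 1) := by
      simp only [SemiconjBy, mul_assoc, mul_inv_cancel_left]
    exact (hXTbar.braid_iff hX1).2 (hbraid 1 le_rfl (by omega))
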